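/- arXiv:1304.2078 — 2 statements merged into one kernel-verified Lean document; each statement's English description precedes it below -/
import Mathlib

section
/- Let f : X → Y be a homeomorphism between metric spaces that is η-quasisymmetric, i.e., there is a homeomorphism η : [0,∞) → [0,∞) with d_Y(f x, f y)/d_Y(f x, f z) ≤ η(d_X(x,y)/d_X(x,z)) for all x, y, z with x ≠ z. Then f is quasi-Möbius: there exists a homeomorphism η' : [0,∞) → [0,∞) such that for all 4-tuples (x₁,x₂,x₃,x₄) of distinct points, the metric cross-ratio satisfies [f x₁, f x₂, f x₃, f x₄] ≤ η'([x₁,x₂,x₃,x₄]). -/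
open NNReal
/-- A homeomorphism `f` between metric spaces is `η`-quasisymmetric (with
`η : [0,∞) → [0,∞)` a homeomorphism) if
`d(f x, f y)/d(f x, f z) ≤ η (d(x,y)/d(x,z))` for all `x, y, z` with `x ≠ z`. -/
def IsQuasisymmetricWith {X Y : Type*} [MetricSpace X] [MetricSpace Y]
    (η : ℝ≥0 ≃ₜ ℝ≥0) (f : X → Y) : Prop :=
  ∀ x y z : X, x ≠ z →
    nndist (f x) (f y) ≤ η (nndist x y / nndist x z) * nndist (f x) (f z)

/-- The metric cross-ratio `[x₁,x₂,x₃,x₄] = (d(x₁,x₃) d(x₂,x₄))/(d(x₁,x₄) d(x₂,x₃))`. -/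
noncomputable def metricCrossRatio {X : Type*} [MetricSpace X] (x₁ x₂ x₃ x₄ : X) : ℝ≥0 :=
  nndist x₁ x₃ * nndist x₂ x₄ / (nndist x₁ x₄ * nndist x₂ x₃)

/-!
Write `t = [x₁,x₂,x₃,x₄] = (p/r)(q/s)` with `p = d(x₁,x₃)`, `q = d(x₂,x₄)`, `r = d(x₁,x₄)`,
`s = d(x₂,x₃)`. Quasisymmetry at the base points `x₁` and `x₂` bounds the image cross-ratio by
`η(p/r) η(q/s)`, and the symmetries of the cross-ratio allow us to assume `p ≤ q` and `r ≤ s`.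
If `s ≤ q`, then `p/r ≤ t`, and the factor `q/s`, which may be large, is avoided by the triangle
inequality through `f x₃`. If `q ≤ s` and `r ≤ q`, the triangle inequality gives `s ≤ 3q`, so
`p/r ≤ 3t`; otherwise both ratios are at most `1` and the smaller one is at most `√t`.
Adding the identity to the resulting monotone bound turns it into a homeomorphism of `[0,∞)`.
-/

theorem Homeomorph.strictMono_of_orderBot {α : Type*} [ConditionallyCompleteLinearOrder α]
    [TopologicalSpace α] [OrderTopology α] [DenselyOrdered α] [OrderBot α] [NoMaxOrder α]
    (e : α ≃ₜ α) : StrictMono e := by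
  refine (e.continuous.strictMono_of_inj e.injective).resolve_right fun hanti => ?_
  obtain ⟨y, hy⟩ := exists_gt (e ⊥)
  obtain ⟨x, rfl⟩ := e.surjective y
  exact (hanti.antitone bot_le).not_gt hy

theorem Homeomorph.map_bot_of_orderBot {α : Type*} [ConditionallyCompleteLinearOrder α]
    [TopologicalSpace α] [OrderTopology α] [DenselyOrdered α] [OrderBot α] [NoMaxOrder α]
    (e : α ≃ₜ α) : e ⊥ = ⊥ := by
  obtain ⟨x, hx⟩ := e.surjective ⊥
  exact le_bot_iff.1 ((e.strictMono_of_orderBot.monotone bot_le).trans_eq hx)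

theorem NNReal.exists_homeomorph_ge {g : ℝ≥0 → ℝ≥0} (hmono : Monotone g) (hcont : Continuous g)
    (hzero : g 0 = 0) : ∃ e : ℝ≥0 ≃ₜ ℝ≥0, ∀ t, g t ≤ e t := by
  have hstrict : StrictMono (g + id) := hmono.add_strictMono strictMono_id
  have hsurj : Function.Surjective (g + id) := fun y => by
    obtain ⟨x, -, hx⟩ := intermediate_value_Icc (zero_le : 0 ≤ y)
      (hcont.add continuous_id).continuousOn ⟨by simp [hzero], le_add_self⟩
    exact ⟨x, hx⟩
  exact ⟨(hstrict.orderIsoOfSurjective _ hsurj).toHomeomorph, fun t => le_self_add⟩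

theorem Monotone.mul_le_mul_sqrt_of_le_one {η : ℝ≥0 → ℝ≥0} (hm : Monotone η) {a b : ℝ≥0}
    (ha : a ≤ 1) (hb : b ≤ 1) : η a * η b ≤ η 1 * η (sqrt (a * b)) := by
  rcases le_total a b with hab | hba
  · have : a ≤ sqrt (a * b) := NNReal.le_sqrt_iff_sq_le.2 (by rw [sq]; gcongr)
    rw [mul_comm]
    exact mul_le_mul' (hm hb) (hm this)
  · have : b ≤ sqrt (a * b) := NNReal.le_sqrt_iff_sq_le.2 (by rw [sq]; gcongr)
    exact mul_le_mul' (hm ha) (hm this)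

noncomputable def quasiMoebiusControl (η : ℝ≥0 → ℝ≥0) (t : ℝ≥0) : ℝ≥0 :=
  (η (sqrt t) + η (3 * t)) * (1 + η (3 * t + 1))

theorem monotone_quasiMoebiusControl {η : ℝ≥0 → ℝ≥0} (hm : Monotone η) :
    Monotone (quasiMoebiusControl η) := fun a b hab => by
  unfold quasiMoebiusControl
  gcongr <;> apply hm <;> gcongr

theorem continuous_quasiMoebiusControl {η : ℝ≥0 → ℝ≥0} (hc : Continuous η) :
    Continuous (quasiMoebiusControl η) := by
  unfold quasiMoebiusControl
  fun_prop

theorem quasiMoebiusControl_zero {η : ℝ≥0 → ℝ≥0} (h0 : η 0 = 0) :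
    quasiMoebiusControl η 0 = 0 := by
  simp [quasiMoebiusControl, h0]

section
variable {X Y : Type*} [MetricSpace X] [MetricSpace Y]

theorem metricCrossRatio_eq_div_mul_div (x₁ x₂ x₃ x₄ : X) :
    metricCrossRatio x₁ x₂ x₃ x₄ =
      nndist x₁ x₃ / nndist x₁ x₄ * (nndist x₂ x₄ / nndist x₂ x₃) :=
  (div_mul_div_comm _ _ _ _).symm

theorem metricCrossRatio_swap (x₁ x₂ x₃ x₄ : X) :
    metricCrossRatio x₂ x₁ x₄ x₃ = metricCrossRatio x₁ x₂ x₃ x₄ := by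
  simp only [metricCrossRatio, mul_comm]

theorem metricCrossRatio_swap_pairs (x₁ x₂ x₃ x₄ : X) :
    metricCrossRatio x₃ x₄ x₁ x₂ = metricCrossRatio x₁ x₂ x₃ x₄ := by
  simp only [metricCrossRatio, nndist_comm x₃, nndist_comm x₄, mul_comm (nndist x₂ x₃)]

variable {η : ℝ≥0 ≃ₜ ℝ≥0} {f : X → Y}

theorem IsQuasisymmetricWith.div_le (hf : IsQuasisymmetricWith η f) {x y z : X} (hxz : x ≠ z) :
    nndist (f x) (f y) / nndist (f x) (f z) ≤ η (nndist x y / nndist x z) :=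
  div_le_of_le_mul₀ zero_le zero_le (hf x y z hxz)

theorem IsQuasisymmetricWith.div_le_one_add (hf : IsQuasisymmetricWith η f) {x y z : X}
    (hxy : x ≠ y) :
    nndist (f x) (f z) / nndist (f x) (f y) ≤ 1 + η (nndist y z / nndist x y) := by
  have hyz := hf y z x hxy.symm
  rw [nndist_comm y x, nndist_comm (f y) (f x)] at hyz
  calc nndist (f x) (f z) / nndist (f x) (f y)
      ≤ (1 + η (nndist y z / nndist x y)) * nndist (f x) (f y) / nndist (f x) (f y) := by
        gcongr
        calc nndist (f x) (f z) ≤ nndist (f x) (f y) + nndist (f y) (f z) := nndist_triangle ..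
          _ ≤ _ := by rw [add_mul, one_mul]; gcongr
    _ ≤ 1 + η (nndist y z / nndist x y) := by
        rw [mul_div_assoc]
        exact mul_le_of_le_one_right zero_le (div_self_le_one _)

variable {x₁ x₂ x₃ x₄ : X}

theorem IsQuasisymmetricWith.metricCrossRatio_le_mul_one_add (hf : IsQuasisymmetricWith η f)
    (h₁₄ : x₁ ≠ x₄) (h₂₃ : x₂ ≠ x₃)
    (hrs : nndist x₁ x₄ ≤ nndist x₂ x₃) (hsq : nndist x₂ x₃ ≤ nndist x₂ x₄) :
    metricCrossRatio (f x₁) (f x₂) (f x₃) (f x₄) ≤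
      η (metricCrossRatio x₁ x₂ x₃ x₄) * (1 + η (metricCrossRatio x₁ x₂ x₃ x₄ + 1)) := by
  have hm : Monotone η := η.strictMono_of_orderBot.monotone
  have hr : 0 < nndist x₁ x₄ := pos_iff_ne_zero.2 (by simpa using h₁₄)
  have hs : 0 < nndist x₂ x₃ := pos_iff_ne_zero.2 (by simpa using h₂₃)
  have hn : nndist x₃ x₄ ≤ nndist x₁ x₃ + nndist x₁ x₄ := by
    simpa only [nndist_comm x₃ x₁] using nndist_triangle x₃ x₁ x₄
  have hA := hf.div_le (y := x₃) h₁₄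
  have hB := hf.div_le_one_add (z := x₄) h₂₃
  rw [metricCrossRatio_eq_div_mul_div, metricCrossRatio_eq_div_mul_div]
  set t := nndist x₁ x₃ / nndist x₁ x₄ * (nndist x₂ x₄ / nndist x₂ x₃)
  have ha : nndist x₁ x₃ / nndist x₁ x₄ ≤ t :=
    le_mul_of_one_le_right zero_le ((one_le_div₀ hs).2 hsq)
  have hn' : nndist x₃ x₄ / nndist x₂ x₃ ≤ t + 1 :=
    calc nndist x₃ x₄ / nndist x₂ x₃ ≤ (nndist x₁ x₃ + nndist x₁ x₄) / nndist x₂ x₃ := by gcongr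
      _ = nndist x₁ x₃ / nndist x₂ x₃ + nndist x₁ x₄ / nndist x₂ x₃ := add_div _ _ _
      _ ≤ nndist x₁ x₃ / nndist x₁ x₄ + 1 :=
        add_le_add (div_le_div_of_nonneg_left zero_le hr hrs) (div_le_one_of_le₀ hrs zero_le)
      _ ≤ t + 1 := by gcongr
  exact mul_le_mul' (hA.trans (hm ha)) (hB.trans (by gcongr; exact hm hn'))

theorem IsQuasisymmetricWith.metricCrossRatio_le_mul_apply_one (hf : IsQuasisymmetricWith η f)
    (h₁₄ : x₁ ≠ x₄) (h₂₃ : x₂ ≠ x₃) (hpq : nndist x₁ x₃ ≤ nndist x₂ x₄)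
    (hrq : nndist x₁ x₄ ≤ nndist x₂ x₄) (hqs : nndist x₂ x₄ ≤ nndist x₂ x₃) :
    metricCrossRatio (f x₁) (f x₂) (f x₃) (f x₄) ≤
      η (3 * metricCrossRatio x₁ x₂ x₃ x₄) * η 1 := by
  have hm : Monotone η := η.strictMono_of_orderBot.monotone
  have hs : 0 < nndist x₂ x₃ := pos_iff_ne_zero.2 (by simpa using h₂₃)
  have hs3q : nndist x₂ x₃ ≤ 3 * nndist x₂ x₄ :=
    calc nndist x₂ x₃ ≤ nndist x₂ x₄ + nndist x₄ x₃ := nndist_triangle _ _ _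
      _ ≤ nndist x₂ x₄ + (nndist x₁ x₃ + nndist x₁ x₄) := by
        rw [nndist_comm x₄, nndist_comm x₁ x₃]; gcongr; exact nndist_triangle _ _ _
      _ ≤ nndist x₂ x₄ + (nndist x₂ x₄ + nndist x₂ x₄) := by gcongr
      _ = 3 * nndist x₂ x₄ := by ring
  have hA := hf.div_le (y := x₃) h₁₄
  have hB := hf.div_le (y := x₄) h₂₃
  rw [metricCrossRatio_eq_div_mul_div, metricCrossRatio_eq_div_mul_div]
  have ha : nndist x₁ x₃ / nndist x₁ x₄ ≤
      3 * (nndist x₁ x₃ / nndist x₁ x₄ * (nndist x₂ x₄ / nndist x₂ x₃)) :=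
    calc nndist x₁ x₃ / nndist x₁ x₄ = nndist x₁ x₃ / nndist x₁ x₄ * 1 := (mul_one _).symm
      _ ≤ nndist x₁ x₃ / nndist x₁ x₄ * (3 * nndist x₂ x₄ / nndist x₂ x₃) := by
        gcongr; exact (one_le_div₀ hs).2 hs3q
      _ = _ := by ring
  exact mul_le_mul' (hA.trans (hm ha)) (hB.trans (hm (div_le_one_of_le₀ hqs zero_le)))

theorem IsQuasisymmetricWith.metricCrossRatio_le_apply_one_mul_sqrt
    (hf : IsQuasisymmetricWith η f) (h₁₄ : x₁ ≠ x₄) (h₂₃ : x₂ ≠ x₃)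
    (hpr : nndist x₁ x₃ ≤ nndist x₁ x₄) (hqs : nndist x₂ x₄ ≤ nndist x₂ x₃) :
    metricCrossRatio (f x₁) (f x₂) (f x₃) (f x₄) ≤
      η 1 * η (sqrt (metricCrossRatio x₁ x₂ x₃ x₄)) := by
  rw [metricCrossRatio_eq_div_mul_div, metricCrossRatio_eq_div_mul_div]
  exact (mul_le_mul' (hf.div_le h₁₄) (hf.div_le h₂₃)).trans
    (η.strictMono_of_orderBot.monotone.mul_le_mul_sqrt_of_le_one
      (div_le_one_of_le₀ hpr zero_le) (div_le_one_of_le₀ hqs zero_le))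

theorem IsQuasisymmetricWith.metricCrossRatio_le_of_le (hf : IsQuasisymmetricWith η f)
    (h₁₄ : x₁ ≠ x₄) (h₂₃ : x₂ ≠ x₃)
    (hpq : nndist x₁ x₃ ≤ nndist x₂ x₄) (hrs : nndist x₁ x₄ ≤ nndist x₂ x₃) :
    metricCrossRatio (f x₁) (f x₂) (f x₃) (f x₄) ≤
      quasiMoebiusControl η (metricCrossRatio x₁ x₂ x₃ x₄) := by
  have hm : Monotone η := η.strictMono_of_orderBot.monotone
  unfold quasiMoebiusControl
  rcases le_total (nndist x₂ x₃) (nndist x₂ x₄) with hsq | hqs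
  · refine (hf.metricCrossRatio_le_mul_one_add h₁₄ h₂₃ hrs hsq).trans ?_
    gcongr
    · exact le_add_left (hm (le_mul_of_one_le_left zero_le (by norm_num)))
    · exact hm (by gcongr; exact le_mul_of_one_le_left zero_le (by norm_num))
  rcases le_total (nndist x₁ x₄) (nndist x₁ x₃) with hrp | hpr
  · refine (hf.metricCrossRatio_le_mul_apply_one h₁₄ h₂₃ hpq (hrp.trans hpq) hqs).trans ?_
    gcongr
    · exact le_add_self
    · exact (hm le_add_self).trans le_add_self
  · refine (hf.metricCrossRatio_le_apply_one_mul_sqrt h₁₄ h₂₃ hpr hqs).trans ?_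
    rw [mul_comm]
    gcongr
    · exact le_self_add
    · exact (hm le_add_self).trans le_add_self

theorem IsQuasisymmetricWith.metricCrossRatio_le (hf : IsQuasisymmetricWith η f)
    (h₁₄ : x₁ ≠ x₄) (h₂₃ : x₂ ≠ x₃) :
    metricCrossRatio (f x₁) (f x₂) (f x₃) (f x₄) ≤
      quasiMoebiusControl η (metricCrossRatio x₁ x₂ x₃ x₄) := by
  rcases le_total (nndist x₁ x₃) (nndist x₂ x₄) with hpq | hqp <;>
    rcases le_total (nndist x₁ x₄) (nndist x₂ x₃) with hrs | hsr
  · exact hf.metricCrossRatio_le_of_le h₁₄ h₂₃ hpq hrs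
  · rw [← metricCrossRatio_swap_pairs x₁, ← metricCrossRatio_swap_pairs (f x₁)]
    refine hf.metricCrossRatio_le_of_le h₂₃.symm h₁₄.symm ?_ ?_ <;>
      simpa only [nndist_comm x₃, nndist_comm x₄]
  · rw [← metricCrossRatio_swap_pairs x₁, ← metricCrossRatio_swap x₃,
      ← metricCrossRatio_swap_pairs (f x₁), ← metricCrossRatio_swap (f x₃)]
    refine hf.metricCrossRatio_le_of_le h₁₄.symm h₂₃.symm ?_ ?_ <;>
      simpa only [nndist_comm x₃, nndist_comm x₄]
  · rw [← metricCrossRatio_swap x₁, ← metricCrossRatio_swap (f x₁)]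
    exact hf.metricCrossRatio_le_of_le h₂₃ h₁₄ hqp hsr

end

/-- Every quasisymmetric homeomorphism between metric spaces is
quasi-Möbius: there is a homeomorphism `η' : [0,∞) → [0,∞)` controlling the
distortion of metric cross-ratios of 4-tuples of distinct points. -/
theorem quasisymmetric_is_quasiMoebius {X Y : Type*} [MetricSpace X] [MetricSpace Y]
    (f : X ≃ₜ Y) (η : ℝ≥0 ≃ₜ ℝ≥0) (hf : IsQuasisymmetricWith η f) :
    ∃ η' : ℝ≥0 ≃ₜ ℝ≥0, ∀ x₁ x₂ x₃ x₄ : X,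
      x₁ ≠ x₂ → x₁ ≠ x₃ → x₁ ≠ x₄ → x₂ ≠ x₃ → x₂ ≠ x₄ → x₃ ≠ x₄ →
      metricCrossRatio (f x₁) (f x₂) (f x₃) (f x₄) ≤
        η' (metricCrossRatio x₁ x₂ x₃ x₄) := by
  obtain ⟨η', hη'⟩ := NNReal.exists_homeomorph_ge
    (monotone_quasiMoebiusControl η.strictMono_of_orderBot.monotone)
    (continuous_quasiMoebiusControl η.continuous) (quasiMoebiusControl_zero η.map_bot_of_orderBot)
  exact ⟨η', fun _ _ _ _ _ _ h₁₄ h₂₃ _ _ => (hf.metricCrossRatio_le h₁₄ h₂₃).trans (hη' _)⟩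
end

section
/- For any two distinct peripheral squares C₁, C₂ of F_{n,p} (boundaries of removed open squares), the Euclidean distance satisfies dist(C₁, C₂) ≥ min{ℓ(C₁), ℓ(C₂)}, where ℓ(Cᵢ) denotes the Euclidean side length of the square Cᵢ. Consequently dist(C₁,C₂) ≥ (1/√2) min{diam(C₁), diam(C₂)}, so the peripheral circles of F_{n,p} are uniformly relatively separated with constant δ = 1/√2. -/
open Set ENNReal

noncomputable section

/-- The closed unit square `[0,1] × [0,1]` in the plane `ℂ`. -/
def sq01 : Set ℂ := {z : ℂ | z.re ∈ Set.Icc (0 : ℝ) 1 ∧ z.im ∈ Set.Icc (0 : ℝ) 1}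

/-- The similarity of ratio `1/n` sending the unit square onto the `(i,j)`-th
subsquare of side `1/n` in the subdivision of the unit square into `n²` subsquares. -/
def Tmap (n : ℕ) (ij : ℕ × ℕ) (z : ℂ) : ℂ :=
  (z + (ij.1 : ℂ) + (ij.2 : ℂ) * Complex.I) / (n : ℂ)

/-- The set of grid positions of the subsquares that survive one subdivision step:
all `n²` positions except the four removed squares, each of which has its lower-left
corner at distance `√2·p/n` from one of the four corners of the unit square, along
the corresponding diagonal. -/
def keepSet (n p : ℕ) : Set (ℕ × ℕ) :=
  {ij | ij.1 < n ∧ ij.2 < n ∧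
    ij ∉ ({(p, p), (n - 1 - p, p), (p, n - 1 - p), (n - 1 - p, n - 1 - p)} : Set (ℕ × ℕ))}

/-- The sets `Q^{(k)}_{n,p}` of the inductive construction: `Q⁽⁰⁾` is the unit
square, and `Q^{(k+1)}` is obtained by subdividing each surviving square into `n²`
subsquares of equal side and removing the interiors of the four subsquares at the
positions excluded by `keepSet`. -/
def Qset (n p : ℕ) : ℕ → Set ℂ
  | 0 => sq01
  | k + 1 => ⋃ ij ∈ keepSet n p, Tmap n ij '' Qset n p k

/-- The Sierpiński carpet `F_{n,p} = ⋂_k Q^{(k)}_{n,p}`. -/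
def carpetF (n p : ℕ) : Set ℂ := ⋂ k, Qset n p k

/-- The closed squares removed at generation `k+1` of the construction of `F_{n,p}`:
at generation one (`k = 0`) the four squares `M̄₁, M̄₂, M̄₃, M̄₄` of side `1/n`,
and at each later generation the images of the previous ones under the similarities
onto surviving subsquares. Each square in `removedSq n p k` has side `1/n^{k+1}`. -/
def removedSq (n p : ℕ) : ℕ → Set (Set ℂ)
  | 0 => {Tmap n (p, p) '' sq01, Tmap n (n - 1 - p, p) '' sq01,
          Tmap n (p, n - 1 - p) '' sq01, Tmap n (n - 1 - p, n - 1 - p) '' sq01}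
  | k + 1 => {C | ∃ ij ∈ keepSet n p, ∃ C₀ ∈ removedSq n p k, C = Tmap n ij '' C₀}


/-- The (Euclidean) distance between two subsets of the plane, as an extended real. -/
def setEDist (A B : Set ℂ) : ℝ≥0∞ := ⨅ (a : A) (b : B), edist (a : ℂ) (b : ℂ)

/-!
Every removed square `C` lies in the unit square at distance at least its side `ℓ(C)` from the
boundary, because the removed positions avoid the border row and column of the `n × n` grid;
`Tmap` preserves this, shrinking both by `1/n`. Two distinct removed squares of later generations
either lie in the same cell of the first subdivision, where `Tmap` rescales the question to
earlier generations, or in different cells, where their margins inside the cells separate them by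
`min ℓ(C₁) ℓ(C₂)`. A first-generation square fills its cell, but a later one keeps its margin in
another cell, and two first-generation squares are a whole row or column of cells apart since
`p` and `n - 1 - p` differ by at least `2`. The second inequality follows from
`diam C ≤ √2 ℓ(C)`.
-/

/-- The side `ℓ(C)` of every square `C ∈ removedSq n p k`. -/
def sideLen (n k : ℕ) : ℝ := 1 / (n : ℝ) ^ (k + 1)

lemma sideLen_succ (n k : ℕ) : sideLen n (k + 1) = sideLen n k / n := by
  rw [sideLen, sideLen, pow_succ, div_div]

lemma sideLen_nonneg (n k : ℕ) : 0 ≤ sideLen n k := by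
  unfold sideLen; positivity

def insetSq (m : ℝ) : Set ℂ := {z : ℂ | z.re ∈ Icc m (1 - m) ∧ z.im ∈ Icc m (1 - m)}

lemma sq01_eq_insetSq_zero : sq01 = insetSq 0 := by
  simp only [sq01, insetSq, sub_zero]

lemma Tmap_re (n : ℕ) (c : ℕ × ℕ) (z : ℂ) : (Tmap n c z).re = (z.re + c.1) / n := by
  simp [Tmap, Complex.div_natCast_re]

lemma Tmap_im (n : ℕ) (c : ℕ × ℕ) (z : ℂ) : (Tmap n c z).im = (z.im + c.2) / n := by
  simp [Tmap, Complex.div_natCast_im]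

lemma dist_Tmap (n : ℕ) (c : ℕ × ℕ) (z w : ℂ) :
    dist (Tmap n c z) (Tmap n c w) = dist z w / n := by
  rw [dist_eq_norm, dist_eq_norm, ← Complex.norm_natCast, ← norm_div]
  congr 1
  simp only [Tmap]
  ring

lemma add_div_mem_Icc {x m m' : ℝ} {a l r n : ℕ} (hn : 0 < n) (hx : x ∈ Icc m (1 - m))
    (ha : l ≤ a ∧ a + r ≤ n) (hl : m' * n ≤ l + m) (hr : m' * n ≤ r - 1 + m) :
    (x + a) / n ∈ Icc m' (1 - m') := by
  have hn' : (0 : ℝ) < n := Nat.cast_pos.mpr hn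
  have hla : (l : ℝ) ≤ a := by exact_mod_cast ha.1
  have har : (a : ℝ) + r ≤ n := by exact_mod_cast ha.2
  constructor
  · rw [le_div_iff₀ hn']; linarith [hx.1]
  · rw [div_le_iff₀ hn']; linarith [hx.2]

lemma Tmap_mem_insetSq {n : ℕ} (hn : 0 < n) {m m' : ℝ} {c : ℕ × ℕ} {l r : ℕ}
    (hc₁ : l ≤ c.1 ∧ c.1 + r ≤ n) (hc₂ : l ≤ c.2 ∧ c.2 + r ≤ n)
    (hl : m' * n ≤ l + m) (hr : m' * n ≤ r - 1 + m) {z : ℂ} (hz : z ∈ insetSq m) :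
    Tmap n c z ∈ insetSq m' := by
  show (Tmap n c z).re ∈ _ ∧ (Tmap n c z).im ∈ _
  rw [Tmap_re, Tmap_im]
  exact ⟨add_div_mem_Icc hn hz.1 hc₁ hl hr, add_div_mem_Icc hn hz.2 hc₂ hl hr⟩

lemma add_sub_one_le_abs {x y m₁ m₂ : ℝ} {a b d : ℕ}
    (hx : x ∈ Icc m₁ (1 - m₁)) (hy : y ∈ Icc m₂ (1 - m₂)) (hd : a + d ≤ b ∨ b + d ≤ a) :
    m₁ + m₂ + d - 1 ≤ |x + a - (y + b)| := by
  rcases hd with hd | hd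
  · have : (a : ℝ) + d ≤ b := by exact_mod_cast hd
    rw [abs_sub_comm]
    exact le_abs.mpr (Or.inl (by linarith [hx.2, hy.1]))
  · have : (b : ℝ) + d ≤ a := by exact_mod_cast hd
    exact le_abs.mpr (Or.inl (by linarith [hx.1, hy.2]))

lemma le_dist_Tmap {n : ℕ} {m₁ m₂ : ℝ} {z w : ℂ} (hz : z ∈ insetSq m₁) (hw : w ∈ insetSq m₂)
    {c c' : ℕ × ℕ} {d : ℕ}
    (hd : (c.1 + d ≤ c'.1 ∨ c'.1 + d ≤ c.1) ∨ (c.2 + d ≤ c'.2 ∨ c'.2 + d ≤ c.2)) :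
    (m₁ + m₂ + d - 1) / n ≤ dist (Tmap n c z) (Tmap n c' w) := by
  have hre := Complex.abs_re_le_norm (Tmap n c z - Tmap n c' w)
  have him := Complex.abs_im_le_norm (Tmap n c z - Tmap n c' w)
  rw [Complex.sub_re, Tmap_re, Tmap_re, ← sub_div, abs_div, Nat.abs_cast] at hre
  rw [Complex.sub_im, Tmap_im, Tmap_im, ← sub_div, abs_div, Nat.abs_cast] at him
  rw [dist_eq_norm]
  rcases hd with hd | hd
  · exact (div_le_div_of_nonneg_right (add_sub_one_le_abs hz.1 hw.1 hd) n.cast_nonneg).trans hre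
  · exact (div_le_div_of_nonneg_right (add_sub_one_le_abs hz.2 hw.2 hd) n.cast_nonneg).trans him

lemma cells_apart_of_ne {c c' : ℕ × ℕ} (h : c ≠ c') :
    (c.1 + 1 ≤ c'.1 ∨ c'.1 + 1 ≤ c.1) ∨ (c.2 + 1 ≤ c'.2 ∨ c'.2 + 1 ≤ c.2) := by
  rw [Ne, Prod.ext_iff] at h
  omega

lemma dist_le_sqrt_two_of_mem_sq01 {z w : ℂ} (hz : z ∈ sq01) (hw : w ∈ sq01) :
    dist z w ≤ √2 := by
  rw [Complex.dist_eq_re_im]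
  apply Real.sqrt_le_sqrt
  have hre : |z.re - w.re| ≤ 1 := abs_sub_le_iff.mpr ⟨by linarith [hz.1.2, hw.1.1],
    by linarith [hz.1.1, hw.1.2]⟩
  have him : |z.im - w.im| ≤ 1 := abs_sub_le_iff.mpr ⟨by linarith [hz.2.2, hw.2.1],
    by linarith [hz.2.1, hw.2.2]⟩
  rw [← sq_abs (z.re - w.re), ← sq_abs (z.im - w.im)]
  nlinarith [abs_nonneg (z.re - w.re), abs_nonneg (z.im - w.im)]

lemma le_setEDist_frontier {A B : Set ℂ} {r : ℝ} (h : ∀ a ∈ A, ∀ b ∈ B, r ≤ dist a b) :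
    ENNReal.ofReal r ≤ setEDist (frontier A) (frontier B) := by
  refine le_iInf₂ fun a b => ?_
  have hab : dist (a : ℂ) b ∈ closure (Ici r) :=
    map_mem_closure₂ continuous_dist (frontier_subset_closure a.2)
      (frontier_subset_closure b.2) h
  rw [closure_Ici] at hab
  rw [edist_dist]
  exact ENNReal.ofReal_le_ofReal hab

lemma ediam_frontier_le {X : Type*} [PseudoMetricSpace X] {S : Set X} {D : ℝ}
    (h : ∀ z ∈ S, ∀ w ∈ S, dist z w ≤ D) :
    Metric.ediam (frontier S) ≤ ENNReal.ofReal D := by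
  calc Metric.ediam (frontier S) ≤ Metric.ediam (closure S) :=
        Metric.ediam_mono frontier_subset_closure
    _ = Metric.ediam S := Metric.ediam_closure S
    _ ≤ ENNReal.ofReal D := Metric.ediam_le fun z hz w hw => by
        rw [edist_dist]; exact ENNReal.ofReal_le_ofReal (h z hz w hw)

lemma ofReal_inv_sqrt_two_mul_le {D : ℝ≥0∞} {s : ℝ} (h : D ≤ ENNReal.ofReal (√2 * s)) :
    ENNReal.ofReal (1 / √2) * D ≤ ENNReal.ofReal s := by
  calc ENNReal.ofReal (1 / √2) * D ≤ ENNReal.ofReal (1 / √2) * ENNReal.ofReal (√2 * s) :=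
        mul_le_mul_right h _
    _ = ENNReal.ofReal s := by
        rw [← ENNReal.ofReal_mul (by positivity), ← mul_assoc, one_div,
          inv_mul_cancel₀ (by positivity), one_mul]

section Carpet

variable {n p : ℕ}

lemma mem_removedSq_zero {S : Set ℂ} (h : S ∈ removedSq n p 0) :
    ∃ c : ℕ × ℕ, (c.1 = p ∨ c.1 = n - 1 - p) ∧ (c.2 = p ∨ c.2 = n - 1 - p) ∧
      S = Tmap n c '' sq01 := by
  simp only [removedSq, Set.mem_insert_iff, Set.mem_singleton_iff] at h
  rcases h with h | h | h | h <;> exact ⟨_, by simp, by simp, h⟩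

lemma dist_le_of_mem_removedSq {k : ℕ} {S : Set ℂ} (hS : S ∈ removedSq n p k)
    {z w : ℂ} (hz : z ∈ S) (hw : w ∈ S) : dist z w ≤ √2 * sideLen n k := by
  induction k generalizing S z w with
  | zero =>
    obtain ⟨c, -, -, rfl⟩ := mem_removedSq_zero hS
    obtain ⟨z, hz, rfl⟩ := hz
    obtain ⟨w, hw, rfl⟩ := hw
    rw [dist_Tmap, sideLen, zero_add, pow_one, ← div_eq_mul_one_div]
    exact div_le_div_of_nonneg_right (dist_le_sqrt_two_of_mem_sq01 hz hw) n.cast_nonneg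
  | succ k ih =>
    obtain ⟨c, -, C, hC, rfl⟩ := hS
    obtain ⟨z, hz, rfl⟩ := hz
    obtain ⟨w, hw, rfl⟩ := hw
    rw [dist_Tmap, sideLen_succ, mul_div_assoc']
    exact div_le_div_of_nonneg_right (ih hC hz hw) n.cast_nonneg

lemma removedSq_subset_insetSq (hp : 1 ≤ p) (hpn : p + 2 ≤ n) {k : ℕ} {S : Set ℂ}
    (hS : S ∈ removedSq n p k) : S ⊆ insetSq (sideLen n k) := by
  have hn : 0 < n := by omega
  have hn' : (0 : ℝ) < n := Nat.cast_pos.mpr hn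
  induction k generalizing S with
  | zero =>
    obtain ⟨c, hc₁, hc₂, rfl⟩ := mem_removedSq_zero hS
    rintro _ ⟨z, hz, rfl⟩
    have h₁ : 1 ≤ c.1 ∧ c.1 + 2 ≤ n := by omega
    have h₂ : 1 ≤ c.2 ∧ c.2 + 2 ≤ n := by omega
    refine Tmap_mem_insetSq hn h₁ h₂ ?_ ?_ (sq01_eq_insetSq_zero ▸ hz) <;>
    · rw [sideLen, zero_add, pow_one, one_div_mul_cancel hn'.ne']; norm_num
  | succ k ih =>
    obtain ⟨c, hc, C, hC, rfl⟩ := hS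
    rintro _ ⟨z, hz, rfl⟩
    refine Tmap_mem_insetSq (r := 1) hn ⟨Nat.zero_le _, hc.1⟩ ⟨Nat.zero_le _, hc.2.1⟩ ?_ ?_
      (ih hC hz) <;>
    · rw [sideLen_succ, div_mul_cancel₀ _ hn'.ne']; norm_num

lemma ofReal_inv_sqrt_two_mul_ediam_frontier_le {k : ℕ} {S : Set ℂ}
    (hS : S ∈ removedSq n p k) :
    ENNReal.ofReal (1 / √2) * Metric.ediam (frontier S) ≤ ENNReal.ofReal (sideLen n k) :=
  ofReal_inv_sqrt_two_mul_le
    (ediam_frontier_le fun _ hz _ hw => dist_le_of_mem_removedSq hS hz hw)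

variable (hp : 1 ≤ p) (hpn : 2 * p + 2 < n)
include hp hpn

lemma le_dist_of_mem_removedSq_zero {S₁ S₂ : Set ℂ} (h₁ : S₁ ∈ removedSq n p 0)
    (h₂ : S₂ ∈ removedSq n p 0) (hne : S₁ ≠ S₂) {z w : ℂ} (hz : z ∈ S₁) (hw : w ∈ S₂) :
    sideLen n 0 ≤ dist z w := by
  obtain ⟨c, hc₁, hc₂, rfl⟩ := mem_removedSq_zero h₁
  obtain ⟨c', hc'₁, hc'₂, rfl⟩ := mem_removedSq_zero h₂
  obtain ⟨z, hz, rfl⟩ := hz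
  obtain ⟨w, hw, rfl⟩ := hw
  have hcc : c ≠ c' := by rintro rfl; exact hne rfl
  -- distinct corner positions differ by `n - 1 - 2p ≥ 2` in some coordinate
  have hd : (c.1 + 2 ≤ c'.1 ∨ c'.1 + 2 ≤ c.1) ∨ (c.2 + 2 ≤ c'.2 ∨ c'.2 + 2 ≤ c.2) := by
    rw [Ne, Prod.ext_iff] at hcc
    omega
  rw [sq01_eq_insetSq_zero] at hz hw
  convert le_dist_Tmap hz hw hd using 1
  rw [sideLen]; norm_num

lemma le_dist_of_mem_removedSq_zero_succ {k : ℕ} {S₁ S₂ : Set ℂ} (h₁ : S₁ ∈ removedSq n p 0)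
    (h₂ : S₂ ∈ removedSq n p (k + 1)) {z w : ℂ} (hz : z ∈ S₁) (hw : w ∈ S₂) :
    sideLen n (k + 1) ≤ dist z w := by
  obtain ⟨c, hc₁, hc₂, rfl⟩ := mem_removedSq_zero h₁
  obtain ⟨c', hc', C, hC, rfl⟩ := h₂
  obtain ⟨z, hz, rfl⟩ := hz
  obtain ⟨w, hw, rfl⟩ := hw
  have hcc : c ≠ c' := by
    rintro rfl
    apply hc'.2.2
    rcases hc₁ with h | h <;> rcases hc₂ with h' | h' <;> simp [Prod.ext_iff, h, h']
  rw [sq01_eq_insetSq_zero] at hz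
  convert le_dist_Tmap hz (removedSq_subset_insetSq hp (by omega) hC hw)
    (cells_apart_of_ne hcc) using 1
  rw [sideLen_succ]; norm_num

lemma le_dist_of_mem_removedSq {k₁ k₂ : ℕ} {S₁ S₂ : Set ℂ} (h₁ : S₁ ∈ removedSq n p k₁)
    (h₂ : S₂ ∈ removedSq n p k₂) (hne : S₁ ≠ S₂) {z w : ℂ} (hz : z ∈ S₁) (hw : w ∈ S₂) :
    min (sideLen n k₁) (sideLen n k₂) ≤ dist z w := by
  induction k₁ generalizing k₂ S₁ S₂ z w with
  | zero =>
    cases k₂ with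
    | zero =>
      exact (min_le_left _ _).trans (le_dist_of_mem_removedSq_zero hp hpn h₁ h₂ hne hz hw)
    | succ k₂ =>
      exact (min_le_right _ _).trans (le_dist_of_mem_removedSq_zero_succ hp hpn h₁ h₂ hz hw)
  | succ k₁ ih =>
    cases k₂ with
    | zero =>
      rw [dist_comm]
      exact (min_le_left _ _).trans (le_dist_of_mem_removedSq_zero_succ hp hpn h₂ h₁ hw hz)
    | succ k₂ =>
      obtain ⟨c, -, C₁, hC₁, rfl⟩ := h₁
      obtain ⟨c', -, C₂, hC₂, rfl⟩ := h₂
      obtain ⟨z, hz, rfl⟩ := hz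
      obtain ⟨w, hw, rfl⟩ := hw
      rw [sideLen_succ, sideLen_succ, min_div_div_right n.cast_nonneg]
      by_cases hcc : c = c'
      · subst hcc
        rw [dist_Tmap]
        have hCC : C₁ ≠ C₂ := by rintro rfl; exact hne rfl
        exact div_le_div_of_nonneg_right (ih hC₁ hC₂ hCC hz hw) n.cast_nonneg
      · have hs := removedSq_subset_insetSq hp (by omega) hC₁ hz
        have hs' := removedSq_subset_insetSq hp (by omega) hC₂ hw
        refine le_trans ?_ (le_dist_Tmap hs hs' (cells_apart_of_ne hcc))
        refine div_le_div_of_nonneg_right ?_ n.cast_nonneg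
        have := sideLen_nonneg n k₂
        push_cast
        linarith [min_le_left (sideLen n k₁) (sideLen n k₂)]

end Carpet

theorem removedSq_uniformly_relatively_separated_general (n p : ℕ)
    (hp : 1 ≤ p) (hpn : 2 * p + 2 < n) (k₁ k₂ : ℕ) (S₁ S₂ : Set ℂ)
    (h₁ : S₁ ∈ removedSq n p k₁) (h₂ : S₂ ∈ removedSq n p k₂) (hne : S₁ ≠ S₂) :
    ENNReal.ofReal (min (1 / (n : ℝ) ^ (k₁ + 1)) (1 / (n : ℝ) ^ (k₂ + 1))) ≤
      setEDist (frontier S₁) (frontier S₂) ∧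
    ENNReal.ofReal (1 / Real.sqrt 2) *
        min (EMetric.diam (frontier S₁)) (EMetric.diam (frontier S₂)) ≤
      setEDist (frontier S₁) (frontier S₂) := by
  have hsep : ENNReal.ofReal (min (sideLen n k₁) (sideLen n k₂)) ≤
      setEDist (frontier S₁) (frontier S₂) :=
    le_setEDist_frontier fun _ hz _ hw => le_dist_of_mem_removedSq hp hpn h₁ h₂ hne hz hw
  refine ⟨hsep, le_trans ?_ hsep⟩
  rw [ENNReal.ofReal_min]
  exact le_min
    ((mul_le_mul_right (min_le_left _ _) _).trans
      (ofReal_inv_sqrt_two_mul_ediam_frontier_le h₁))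
    ((mul_le_mul_right (min_le_right _ _) _).trans
      (ofReal_inv_sqrt_two_mul_ediam_frontier_le h₂))

/-- Any two distinct peripheral squares of `F_{n,p}` (boundaries
of removed squares, of side lengths `1/n^{k₁+1}` and `1/n^{k₂+1}`) satisfy
`dist(C₁, C₂) ≥ min{ℓ(C₁), ℓ(C₂)}`, and consequently
`dist(C₁, C₂) ≥ (1/√2)·min{diam C₁, diam C₂}`: the peripheral circles of
`F_{n,p}` are uniformly relatively separated with constant `δ = 1/√2`. -/
theorem removedSq_uniformly_relatively_separated (n p : ℕ) (hn : 5 ≤ n)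
    (hp : 1 ≤ p) (hpn : 2 * p + 2 < n) (k₁ k₂ : ℕ) (S₁ S₂ : Set ℂ)
    (h₁ : S₁ ∈ removedSq n p k₁) (h₂ : S₂ ∈ removedSq n p k₂) (hne : S₁ ≠ S₂) :
    ENNReal.ofReal (min (1 / (n : ℝ) ^ (k₁ + 1)) (1 / (n : ℝ) ^ (k₂ + 1))) ≤
      setEDist (frontier S₁) (frontier S₂) ∧
    ENNReal.ofReal (1 / Real.sqrt 2) *
        min (EMetric.diam (frontier S₁)) (EMetric.diam (frontier S₂)) ≤
      setEDist (frontier S₁) (frontier S₂) :=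
  removedSq_uniformly_relatively_separated_general n p hp hpn k₁ k₂ S₁ S₂ h₁ h₂ hne
end
end
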